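/- arXiv:2509.23466 — 2 statements merged into one kernel-verified Lean document; each statement's English description precedes it below -/
import Mathlib

section
/- Let t ∈ (0,π) and A = i·e^{-it} sin t · I_m (an invertible complex symmetric m×m matrix with Re A ≥ 0 and Re A invertible). Then the Fourier transform of x ↦ (4π)^{-m/2} (det A)^{-1/2} exp(-⟨A⁻¹x,x⟩/4) equals ξ ↦ exp(-4π² ⟨Aξ,ξ⟩), where the square root branch is the analytic one that is positive for positive real A; that is, 𝓕[ (e^{imt/2}/(e^{iπm/4}(sin t)^{m/2})) (4π)^{-m/2} e^{i e^{it}|x|²/(4 sin t)} ](ξ) = e^{-4π² i e^{-it} sin t |ξ|²}. -/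
open Complex Real MeasureTheory
open scoped FourierTransform

/-- Hörmander's Gaussian Fourier transform formula specialized to
`A = i e^{-it} sin t · I_m`, `t ∈ (0,π)`:
`𝓕[ (e^{imt/2}/(e^{iπm/4}(sin t)^{m/2})) (4π)^{-m/2} e^{i e^{it}|x|²/(4 sin t)} ](ξ)
  = e^{-4π² i e^{-it} sin t |ξ|²}`. -/
theorem fourier_gaussian_complex (m : ℕ) (t : ℝ) (ht : t ∈ Set.Ioo 0 Real.pi)
    (ξ : EuclideanSpace ℝ (Fin m)) :
    𝓕 (fun x : EuclideanSpace ℝ (Fin m) =>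
        Complex.exp (Complex.I * m * t / 2) /
            (Complex.exp (Complex.I * Real.pi * m / 4) *
              ((Real.sin t ^ ((m : ℝ) / 2) : ℝ) : ℂ)) *
          (((4 * Real.pi) ^ (-(m : ℝ) / 2) : ℝ) : ℂ) *
          Complex.exp (Complex.I * Complex.exp (Complex.I * t) * ((‖x‖ ^ 2 : ℝ) : ℂ) /
            (4 * (Real.sin t : ℂ)))) ξ =
      Complex.exp (-4 * Real.pi ^ 2 * Complex.I * Complex.exp (-Complex.I * t) *
        (Real.sin t : ℂ) * ((‖ξ‖ ^ 2 : ℝ) : ℂ)) := by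
  obtain ⟨ht0, htπ⟩ := ht
  have hsin : 0 < Real.sin t := Real.sin_pos_of_pos_of_lt_pi ht0 htπ
  have hsinC : (Real.sin t : ℂ) ≠ 0 := by exact_mod_cast hsin.ne'
  have hexp : Complex.exp (Complex.I * t) = (Real.cos t : ℂ) + (Real.sin t : ℂ) * Complex.I := by
    rw [mul_comm, Complex.exp_mul_I]; simp
  set c : ℂ := Complex.exp (Complex.I * m * t / 2) /
            (Complex.exp (Complex.I * Real.pi * m / 4) *
              ((Real.sin t ^ ((m : ℝ) / 2) : ℝ) : ℂ)) *
          (((4 * Real.pi) ^ (-(m : ℝ) / 2) : ℝ) : ℂ) with hc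
  set b : ℂ := -(Complex.I * Complex.exp (Complex.I * t)) / (4 * (Real.sin t : ℂ)) with hbdef
  have hbval : b = ((Real.sin t : ℂ) - (Real.cos t : ℂ) * Complex.I) / ((4 * Real.sin t : ℝ) : ℂ) := by
    rw [hbdef, hexp, Complex.ofReal_mul, Complex.ofReal_ofNat]
    congr 1
    linear_combination (-(Real.sin t : ℂ)) * Complex.I_sq
  have hbre : 0 < b.re := by
    rw [hbval, Complex.div_ofReal_re]
    simp only [Complex.sub_re, Complex.ofReal_re, Complex.mul_re, Complex.I_re, Complex.I_im,
      Complex.ofReal_im, mul_zero, mul_one, zero_mul, sub_zero, zero_sub, sub_neg_eq_add, zero_add]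
    positivity
  have hb0 : b ≠ 0 := by intro h; rw [h] at hbre; simp at hbre
  -- rewrite the function
  have hfun : (fun x : EuclideanSpace ℝ (Fin m) =>
        c * Complex.exp (Complex.I * Complex.exp (Complex.I * t) * ((‖x‖ ^ 2 : ℝ) : ℂ) /
            (4 * (Real.sin t : ℂ))))
      = c • (fun x : EuclideanSpace ℝ (Fin m) => Complex.exp (-b * (‖x‖ : ℂ) ^ 2)) := by
    funext x
    simp only [Pi.smul_apply, smul_eq_mul, hbdef]
    congr 1
    push_cast
    field_simp
  rw [show (fun x : EuclideanSpace ℝ (Fin m) =>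
        Complex.exp (Complex.I * m * t / 2) /
            (Complex.exp (Complex.I * Real.pi * m / 4) *
              ((Real.sin t ^ ((m : ℝ) / 2) : ℝ) : ℂ)) *
          (((4 * Real.pi) ^ (-(m : ℝ) / 2) : ℝ) : ℂ) *
          Complex.exp (Complex.I * Complex.exp (Complex.I * t) * ((‖x‖ ^ 2 : ℝ) : ℂ) /
            (4 * (Real.sin t : ℂ)))) = c • (fun x : EuclideanSpace ℝ (Fin m) =>
              Complex.exp (-b * (‖x‖ : ℂ) ^ 2)) from hfun]
  have hsmul : 𝓕 (c • (fun x : EuclideanSpace ℝ (Fin m) => Complex.exp (-b * (‖x‖ : ℂ) ^ 2)))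
      = c • 𝓕 (fun x : EuclideanSpace ℝ (Fin m) => Complex.exp (-b * (‖x‖ : ℂ) ^ 2)) :=
    VectorFourier.fourierIntegral_const_smul _ _ _ _ _
  rw [hsmul]
  simp only [Pi.smul_apply, smul_eq_mul]
  rw [fourier_gaussian_innerProductSpace hbre]
  rw [finrank_euclideanSpace_fin]
  have h2 : -(π:ℂ) ^ 2 * ((‖ξ‖:ℂ)) ^ 2 / b =
      -4 * Real.pi ^ 2 * Complex.I * Complex.exp (-Complex.I * t) *
        (Real.sin t : ℂ) * ((‖ξ‖ ^ 2 : ℝ) : ℂ) := by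
    rw [hbdef, show (-Complex.I * (t:ℂ)) = -(Complex.I * t) from by ring, Complex.exp_neg]
    have hE := Complex.exp_ne_zero (Complex.I * (t:ℂ))
    push_cast
    field_simp
    linear_combination ((‖ξ‖:ℂ)^2 * Complex.sin (t:ℂ)) * Complex.I_sq
  have hrpos : (0:ℝ) < 4 * π * Real.sin t := by positivity
  set L : ℂ := ((Real.log (4 * π * Real.sin t) : ℝ) : ℂ) + ((π/2 - t : ℝ) : ℂ) * Complex.I with hLdef
  have hc1 : Complex.cos (((π/2 - t : ℝ)) : ℂ) = (Real.sin t : ℂ) := by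
    rw [← Complex.ofReal_cos, Real.cos_pi_div_two_sub]
  have hs1 : Complex.sin (((π/2 - t : ℝ)) : ℂ) = (Real.cos t : ℂ) := by
    rw [← Complex.ofReal_sin, Real.sin_pi_div_two_sub]
  have pyth : (Real.sin t : ℂ)^2 + (Real.cos t : ℂ)^2 = 1 := by
    exact_mod_cast Real.sin_sq_add_cos_sq t
  have hL : Complex.exp L = (π:ℂ) / b := by
    rw [eq_div_iff hb0, hbval, hLdef, Complex.exp_add, ← Complex.ofReal_exp,
      Real.exp_log hrpos, Complex.exp_mul_I, hc1, hs1]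
    have h4s : ((4 * Real.sin t : ℝ) : ℂ) ≠ 0 := by
      exact_mod_cast (show (4 * Real.sin t : ℝ) ≠ 0 by positivity)
    have hsC : Complex.sin (t:ℂ) ≠ 0 := by
      rw [← Complex.ofReal_sin]; exact_mod_cast hsin.ne'
    push_cast
    field_simp
    linear_combination Complex.sin_sq_add_cos_sq (t:ℂ)
      - (Complex.cos (t:ℂ)^2) * Complex.I_sq
  have hpow : ((π:ℂ)/b) ^ ((m:ℂ)/2) = Complex.exp (((m:ℂ)/2) * L) := by
    rw [← hL, Complex.cpow_def_of_ne_zero (Complex.exp_ne_zero L),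
      Complex.log_exp ?_ ?_, mul_comm]
    · simp only [hLdef, Complex.add_im, Complex.ofReal_im, Complex.mul_im, Complex.I_im,
        Complex.I_re, Complex.ofReal_re, mul_one, mul_zero, zero_add, add_zero]
      nlinarith [Real.pi_pos]
    · simp only [hLdef, Complex.add_im, Complex.ofReal_im, Complex.mul_im, Complex.I_im,
        Complex.I_re, Complex.ofReal_re, mul_one, mul_zero, zero_add, add_zero]
      nlinarith [Real.pi_pos]
  have e1 : Complex.exp (((m:ℂ)/2) * ((Real.log (4*π*Real.sin t) : ℝ) : ℂ)) =
      (((4*π)^((m:ℝ)/2) : ℝ) : ℂ) * ((Real.sin t ^ ((m:ℝ)/2) : ℝ) : ℂ) := by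
    rw [show ((m:ℂ)/2) * ((Real.log (4*π*Real.sin t) : ℝ) : ℂ)
        = ((((m:ℝ)/2) * Real.log (4*π*Real.sin t) : ℝ) : ℂ) from by push_cast; ring,
      ← Complex.ofReal_exp, ← Complex.ofReal_mul]
    congr 1
    rw [← Real.mul_rpow (by positivity) hsin.le, Real.rpow_def_of_pos hrpos, mul_comm]
  have e2 : Complex.exp (Complex.I * m * t / 2) *
      Complex.exp (((m:ℂ)/2) * (((π/2 - t : ℝ) : ℂ) * Complex.I)) =
      Complex.exp (Complex.I * Real.pi * m / 4) := by
    rw [← Complex.exp_add]; congr 1; push_cast; ring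
  have hsplit : Complex.exp (((m:ℂ)/2) * L) =
      (((4*π)^((m:ℝ)/2) : ℝ) : ℂ) * ((Real.sin t ^ ((m:ℝ)/2) : ℝ) : ℂ) *
        Complex.exp (((m:ℂ)/2) * (((π/2 - t : ℝ) : ℂ) * Complex.I)) := by
    rw [hLdef, mul_add, Complex.exp_add, e1]
  have hSpos : 0 < Real.sin t ^ ((m:ℝ)/2) := Real.rpow_pos_of_pos hsin _
  have hPpos : 0 < (4*π) ^ ((m:ℝ)/2) := Real.rpow_pos_of_pos (by positivity) _
  have hneg : ((4*Real.pi) ^ (-(m:ℝ)/2) : ℝ) = (((4*Real.pi) ^ ((m:ℝ)/2))⁻¹ : ℝ) := by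
    rw [neg_div, Real.rpow_neg (by positivity)]
  have hone : c * Complex.exp (((m:ℂ)/2) * L) = 1 := by
    rw [hc, hneg, hsplit]
    push_cast
    rw [div_mul_eq_mul_div, div_mul_eq_mul_div, div_eq_one_iff_eq (by
      push_cast
      exact mul_ne_zero (Complex.exp_ne_zero _) (by exact_mod_cast hSpos.ne'))]
    have hPne : (((4*π)^((m:ℝ)/2) : ℝ) : ℂ) ≠ 0 := by exact_mod_cast hPpos.ne'
    have hSne : ((Real.sin t ^ ((m:ℝ)/2) : ℝ) : ℂ) ≠ 0 := by exact_mod_cast hSpos.ne'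
    have e2' : Complex.exp (Complex.I * m * t / 2) *
        Complex.exp (((m:ℂ)/2) * (((π:ℂ)/2 - (t:ℂ)) * Complex.I)) =
        Complex.exp (Complex.I * Real.pi * m / 4) := by
      rw [← Complex.exp_add]; congr 1; push_cast; ring
    have e2'' : Complex.exp (Complex.I * m * t / 2) *
        Complex.exp ((m:ℂ) * (((π:ℂ) - 2 * (t:ℂ)) * Complex.I) / (2 * 2)) =
        Complex.exp (Complex.I * Real.pi * m / 4) := by
      rw [← Complex.exp_add]; congr 1; push_cast; ring
    field_simp
    have e3 : Complex.exp (Complex.I * m * t / 2) * Complex.exp (Complex.I * m * ((π:ℂ) - (t:ℂ) * 2) / 2 ^ 2) = Complex.exp (Complex.I * m * (π:ℂ) / 4) := by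
      rw [← Complex.exp_add]; congr 1; ring
    linear_combination e3
  rw [hpow, h2, ← mul_assoc, hone, one_mul]
end

section
/- Let σ_{(x,s)} act on functions on ℝ^m × ℝ by σ_{(x,s)}f(y,t) = f(y + e^{-tB}x, t + s), corresponding to the group law (x,s)∘(y,t) = (y + e^{-tB}x, t+s). Then for ℒf = tr(Q∇²f) + ⟨Bx,∇f⟩ and any C² function f, one has (∂_t - ℒ)(σ_{(x,s)}f) = σ_{(x,s)}[(∂_t - ℒ)f]. -/
open Complex

/-- Partial derivative in the `j`-th coordinate direction. -/
noncomputable def pd {m : ℕ} (g : (Fin m → ℝ) → ℂ) (x : Fin m → ℝ) (j : Fin m) : ℂ :=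
  fderiv ℝ g x (Pi.single j 1)

/-- The Kolmogorov–Hörmander operator `ℒg = tr(Q∇²g) + ⟨Bx,∇g⟩`. -/
noncomputable def Lop {m : ℕ} (Q B : Matrix (Fin m) (Fin m) ℝ)
    (g : (Fin m → ℝ) → ℂ) (y : Fin m → ℝ) : ℂ :=
  (∑ j, ∑ k, (Q j k : ℂ) * pd (fun z => pd g z k) y j) +
    ∑ j, ((B.mulVec y j : ℝ) : ℂ) * pd g y j

lemma hasDerivAt_expcurve {m : ℕ} (B : Matrix (Fin m) (Fin m) ℝ) (x : Fin m → ℝ) (t : ℝ) :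
    HasDerivAt (fun τ : ℝ => (NormedSpace.exp ((-τ) • B)).mulVec x)
      (-(B.mulVec ((NormedSpace.exp ((-t) • B)).mulVec x))) t := by
  letI : SeminormedRing (Matrix (Fin m) (Fin m) ℝ) := Matrix.linftyOpSemiNormedRing
  letI : NormedRing (Matrix (Fin m) (Fin m) ℝ) := Matrix.linftyOpNormedRing
  letI : NormedAlgebra ℝ (Matrix (Fin m) (Fin m) ℝ) := Matrix.linftyOpNormedAlgebra
  have hE : HasDerivAt (fun τ : ℝ => NormedSpace.exp (τ • (-B)))
      ((-B) * NormedSpace.exp (t • (-B))) t := hasDerivAt_exp_smul_const' (-B) t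
  have hE' : HasDerivAt (fun τ : ℝ => NormedSpace.exp ((-τ) • B))
      ((-B) * NormedSpace.exp ((-t) • B)) t := by
    simpa only [neg_smul, smul_neg] using hE
  let L : Matrix (Fin m) (Fin m) ℝ →ₗ[ℝ] (Fin m → ℝ) :=
    { toFun := fun M => M.mulVec x
      map_add' := fun M N => Matrix.add_mulVec M N x
      map_smul' := fun r M => Matrix.smul_mulVec r M x }
  have h2 : HasDerivAt (fun τ : ℝ => ((NormedSpace.exp ((-τ) • B)).mulVec x))
      (((-B) * NormedSpace.exp ((-t) • B)).mulVec x) t := by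
    have h := (L.toContinuousLinearMap.hasFDerivAt
      (x := NormedSpace.exp ((-t) • B))).comp_hasDerivAt t hE'
    exact h
  simpa only [Matrix.neg_mul, Matrix.neg_mulVec, ← Matrix.mulVec_mulVec] using h2

lemma pd_translate {m : ℕ} {g : (Fin m → ℝ) → ℂ} (v y : Fin m → ℝ)
    (hg : DifferentiableAt ℝ g (y + v)) (j : Fin m) :
    pd (fun z => g (z + v)) y j = pd g (y + v) j := by
  have h : HasFDerivAt (fun z : Fin m → ℝ => g (z + v)) (fderiv ℝ g (y + v)) y := by
    have := hg.hasFDerivAt.comp y ((hasFDerivAt_id y).add_const v)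
    exact this
  rw [pd, h.fderiv, pd]

/-- Left-translation invariance: with `σ_{(x,s)}f(y,t) = f(y + e^{-tB}x, t+s)`, one has
`(∂_t - ℒ)(σ_{(x,s)}f) = σ_{(x,s)}[(∂_t - ℒ)f]`. -/
theorem group_invariance {m : ℕ} (Q B : Matrix (Fin m) (Fin m) ℝ) (hQ : Q.IsSymm)
    (f : (Fin m → ℝ) → ℝ → ℂ)
    (hf : ContDiff ℝ 2 fun p : (Fin m → ℝ) × ℝ => f p.1 p.2)
    (x : Fin m → ℝ) (s : ℝ) (σf : (Fin m → ℝ) → ℝ → ℂ)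
    (hσf : ∀ (y : Fin m → ℝ) (t : ℝ),
      σf y t = f (y + (NormedSpace.exp ((-t) • B)).mulVec x) (t + s)) :
    ∀ (y : Fin m → ℝ) (t : ℝ),
      deriv (fun τ => σf y τ) t - Lop Q B (fun z => σf z t) y =
        deriv (fun τ => f (y + (NormedSpace.exp ((-t) • B)).mulVec x) τ) (t + s) -
          Lop Q B (fun z => f z (t + s)) (y + (NormedSpace.exp ((-t) • B)).mulVec x) := by
  intro y t
  set G : (Fin m → ℝ) × ℝ → ℂ := fun p => f p.1 p.2 with hG
  set u : ℝ := t + s with hu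
  set v : Fin m → ℝ := (NormedSpace.exp ((-t) • B)).mulVec x with hv
  have hGd : Differentiable ℝ G := hf.differentiable (by norm_num)
  have hfu2 : ContDiff ℝ 2 (fun z : Fin m → ℝ => f z u) :=
    hf.comp (contDiff_id.prodMk contDiff_const)
  have hfud : Differentiable ℝ (fun z : Fin m → ℝ => f z u) :=
    hfu2.differentiable (by norm_num)
  have hpdk : ∀ k, Differentiable ℝ (fun z => pd (fun w : Fin m → ℝ => f w u) z k) := by
    intro k
    have h1 : ContDiff ℝ 1 (fderiv ℝ (fun z : Fin m → ℝ => f z u)) :=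
      hfu2.fderiv_right (by norm_num)
    have h2 : ContDiff ℝ 1
        (fun z => fderiv ℝ (fun w : Fin m → ℝ => f w u) z (Pi.single k 1)) :=
      h1.clm_apply contDiff_const
    exact h2.differentiable one_ne_zero
  -- spatial partials in terms of the full derivative
  have hsp : ∀ (z : Fin m → ℝ) (k : Fin m),
      pd (fun w => f w u) z k = fderiv ℝ G (z, u) (Pi.single k 1, 0) := by
    intro z k
    have hcur : HasFDerivAt (fun w : Fin m → ℝ => ((w, u) : (Fin m → ℝ) × ℝ))
        ((ContinuousLinearMap.id ℝ (Fin m → ℝ)).prod 0) z :=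
      (hasFDerivAt_id z).prodMk (hasFDerivAt_const u z)
    have h : HasFDerivAt (fun w : Fin m → ℝ => f w u)
        ((fderiv ℝ G (z, u)).comp ((ContinuousLinearMap.id ℝ (Fin m → ℝ)).prod 0)) z := by
      have h' := ((hGd (z, u)).hasFDerivAt).comp z hcur
      exact h'
    rw [pd, h.fderiv]
    simp
  -- decomposition of full derivative applied to (w, 1)
  have key : ∀ w : Fin m → ℝ, fderiv ℝ G (y + v, u) (w, 1)
      = fderiv ℝ G (y + v, u) (0, 1)
        + ∑ j, ((w j : ℝ) : ℂ) * pd (fun z => f z u) (y + v) j := by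
    intro w
    have hs1 : ∑ j, w j • (Pi.single j 1 : Fin m → ℝ) = w := by
      ext i
      simp [Finset.sum_apply, Pi.single_apply, mul_ite]
    have hwsum : ((w, (1 : ℝ)) : (Fin m → ℝ) × ℝ)
        = (0, 1) + ∑ j, w j • (((Pi.single j 1 : Fin m → ℝ), (0 : ℝ)) : (Fin m → ℝ) × ℝ) := by
      have h2 : ∑ j, w j • (((Pi.single j 1 : Fin m → ℝ), (0 : ℝ)) : (Fin m → ℝ) × ℝ)
          = (w, 0) := by
        rw [Prod.ext_iff]
        constructor
        · rw [Prod.fst_sum]; simpa using hs1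
        · rw [Prod.snd_sum]; simp
      rw [h2, Prod.mk_add_mk, zero_add, add_zero]
    rw [hwsum, map_add, map_sum]
    congr 1
    refine Finset.sum_congr rfl fun j _ => ?_
    rw [map_smul, ← hsp (y + v) j, Complex.real_smul]
  -- the two time derivatives
  have hc := hasDerivAt_expcurve B x t
  have hF : HasDerivAt (fun τ : ℝ =>
        (((y + (NormedSpace.exp ((-τ) • B)).mulVec x), τ + s) : (Fin m → ℝ) × ℝ))
      (-(B.mulVec v), 1) t := by
    exact (hc.const_add y).prodMk ((hasDerivAt_id t).add_const s)
  have hσ : HasDerivAt (fun τ : ℝ => G ((y + (NormedSpace.exp ((-τ) • B)).mulVec x), τ + s))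
      (fderiv ℝ G (y + v, u) (-(B.mulVec v), 1)) t := by
    have h' := ((hGd (y + v, u)).hasFDerivAt).comp_hasDerivAt t hF
    exact h'
  have e1 : deriv (fun τ => σf y τ) t = fderiv ℝ G (y + v, u) (-(B.mulVec v), 1) := by
    have heq : (fun τ => σf y τ)
        = fun τ : ℝ => G ((y + (NormedSpace.exp ((-τ) • B)).mulVec x), τ + s) :=
      funext fun τ => hσf y τ
    rw [heq]
    exact hσ.deriv
  have hpt : HasDerivAt (fun τ : ℝ => G ((y + v, τ) : (Fin m → ℝ) × ℝ))
      (fderiv ℝ G (y + v, u) ((0 : Fin m → ℝ), 1)) u := by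
    have hcur : HasDerivAt (fun τ : ℝ => (((y + v : Fin m → ℝ), τ) : (Fin m → ℝ) × ℝ))
        ((0 : Fin m → ℝ), 1) u := (hasDerivAt_const u (y + v)).prodMk (hasDerivAt_id u)
    exact ((hGd (y + v, u)).hasFDerivAt).comp_hasDerivAt u hcur
  have e2 : deriv (fun τ => f (y + v) τ) u = fderiv ℝ G (y + v, u) ((0 : Fin m → ℝ), 1) :=
    hpt.deriv
  -- translation invariance of Lop up to the drift correction
  have hσt : (fun z => σf z t) = fun z => f (z + v) u := funext fun z => hσf z t
  have hLop : Lop Q B (fun z => f (z + v) u) y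
      = Lop Q B (fun z => f z u) (y + v)
        - ∑ j, ((B.mulVec v j : ℝ) : ℂ) * pd (fun z => f z u) (y + v) j := by
    simp only [Lop]
    have hsecond : ∀ (j k : Fin m),
        pd (fun z => pd (fun w => f (w + v) u) z k) y j
          = pd (fun z => pd (fun w => f w u) z k) (y + v) j := by
      intro j k
      have e : (fun z => pd (fun w => f (w + v) u) z k)
          = fun z => pd (fun w : Fin m → ℝ => f w u) (z + v) k :=
        funext fun z => pd_translate v z (hfud (z + v)) k
      rw [e]
      exact pd_translate v y ((hpdk k) (y + v)) j
    have hfirst : ∀ j, pd (fun z => f (z + v) u) y j = pd (fun z => f z u) (y + v) j :=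
      fun j => pd_translate v y (hfud (y + v)) j
    simp only [hsecond, hfirst, Matrix.mulVec_add, Pi.add_apply]
    push_cast
    simp only [add_mul, Finset.sum_add_distrib]
    ring
  rw [hσt, hLop, e1, e2, key (-(B.mulVec v))]
  have hneg : ∀ j, (((-(B.mulVec v)) j : ℝ) : ℂ) = -((B.mulVec v j : ℝ) : ℂ) := by
    intro j; simp [Pi.neg_apply]
  simp only [hneg, neg_mul, Finset.sum_neg_distrib]
  ring
end
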